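/- arXiv:0911.2509 — 10 statements merged into one kernel-verified Lean document; each statement's English description precedes it below -/
import Mathlib

section
/- Let B ≥ 1 be an integer, let L_1,…,L_B be positive reals, let 𝔸 and 𝔹 be arbitrary 2B×2B complex matrices, and let k ∈ ℂ. Then det( 𝔸·fromBlocks(0, I_B, sin(k𝕃), cos(k𝕃)) + k·𝔹·fromBlocks(I_B, 0, −cos(k𝕃), sin(k𝕃)) ) = det( 𝔸·fromBlocks(−sin(k𝕃/2), cos(k𝕃/2), sin(k𝕃/2), cos(k𝕃/2)) + k·𝔹·fromBlocks(cos(k𝕃/2), sin(k𝕃/2), −cos(k𝕃/2), sin(k𝕃/2)) ). -/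
/-!
The second matrix is the first one multiplied on the right by the block rotation
`R(k𝕃/2) = [[cos(k𝕃/2), sin(k𝕃/2)], [-sin(k𝕃/2), cos(k𝕃/2)]]`, and `det R = ∏ (cos² + sin²) = 1`.
Since all blocks are diagonal, the factorisation reduces entrywise to
`sin(θ - θ/2) = sin(θ/2)` and `cos(θ - θ/2) = cos(θ/2)`.
-/

open Matrix

namespace Complex

theorem sin_mul_cos_half_sub_cos_mul_sin_half (z : ℂ) :
    sin z * cos (z / 2) - cos z * sin (z / 2) = sin (z / 2) := by
  rw [← sin_sub, sub_half]

theorem sin_mul_sin_half_add_cos_mul_cos_half (z : ℂ) :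
    sin z * sin (z / 2) + cos z * cos (z / 2) = cos (z / 2) := by
  rw [add_comm, ← cos_sub, sub_half]

end Complex

namespace Matrix

variable {ι R : Type*} [Fintype ι] [DecidableEq ι]

theorem fromBlocks_diagonal_mul_fromBlocks_diagonal [NonUnitalNonAssocSemiring R]
    (a b c d a' b' c' d' : ι → R) :
    fromBlocks (diagonal a) (diagonal b) (diagonal c) (diagonal d) *
        fromBlocks (diagonal a') (diagonal b') (diagonal c') (diagonal d') =
      fromBlocks (diagonal (a * a' + b * c')) (diagonal (a * b' + b * d'))
        (diagonal (c * a' + d * c')) (diagonal (c * b' + d * d')) := by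
  simp only [fromBlocks_multiply, diagonal_mul_diagonal, diagonal_add]
  rfl

theorem det_fromBlocks_diagonal [CommRing R] (a b c d : ι → R) :
    (fromBlocks (diagonal a) (diagonal b) (diagonal c) (diagonal d)).det =
      ∏ i, (a i * d i - b i * c i) := by
  -- Interleaving the two copies of `ι` makes the matrix block diagonal with `2 × 2` blocks.
  let e : Fin 2 × ι ≃ ι ⊕ ι :=
    (finTwoEquiv.prodCongr (Equiv.refl ι)).trans (Equiv.boolProdEquivSum ι)
  have h_blockDiagonal :
      (fromBlocks (diagonal a) (diagonal b) (diagonal c) (diagonal d)).submatrix e e =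
        blockDiagonal fun i => !![a i, b i; c i, d i] := by
    ext ⟨p, i⟩ ⟨q, j⟩
    fin_cases p <;> fin_cases q <;> by_cases h : i = j <;>
      simp [e, finTwoEquiv, blockDiagonal_apply, h]
  rw [← det_submatrix_equiv_self e, h_blockDiagonal, det_blockDiagonal]
  simp [det_fin_two_of]

section BlockRotation

open Complex

noncomputable def blockRotation (θ : ι → ℂ) : Matrix (ι ⊕ ι) (ι ⊕ ι) ℂ :=
  fromBlocks (diagonal fun i => cos (θ i)) (diagonal fun i => sin (θ i))
    (-diagonal fun i => sin (θ i)) (diagonal fun i => cos (θ i))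

theorem det_blockRotation (θ : ι → ℂ) : (blockRotation θ).det = 1 := by
  rw [blockRotation, diagonal_neg, det_fromBlocks_diagonal]
  refine Finset.prod_eq_one fun i _ => ?_
  linear_combination cos_sq_add_sin_sq (θ i)

theorem fromBlocks_zero_one_sin_cos_mul_blockRotation_half (θ : ι → ℂ) :
    fromBlocks 0 1 (diagonal fun i => sin (θ i)) (diagonal fun i => cos (θ i)) *
        blockRotation (fun i => θ i / 2) =
      fromBlocks (-diagonal fun i => sin (θ i / 2)) (diagonal fun i => cos (θ i / 2))
        (diagonal fun i => sin (θ i / 2)) (diagonal fun i => cos (θ i / 2)) := by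
  simp only [blockRotation, diagonal_neg]
  rw [← diagonal_zero, ← diagonal_one, fromBlocks_diagonal_mul_fromBlocks_diagonal]
  simp only [fromBlocks_inj, diagonal_eq_diagonal_iff, Pi.add_apply, Pi.mul_apply]
  refine ⟨fun i => by ring, fun i => by ring, fun i => ?_, fun i => ?_⟩
  · linear_combination sin_mul_cos_half_sub_cos_mul_sin_half (θ i)
  · exact sin_mul_sin_half_add_cos_mul_cos_half (θ i)

theorem fromBlocks_one_zero_cos_sin_mul_blockRotation_half (θ : ι → ℂ) :
    fromBlocks 1 0 (-diagonal fun i => cos (θ i)) (diagonal fun i => sin (θ i)) *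
        blockRotation (fun i => θ i / 2) =
      fromBlocks (diagonal fun i => cos (θ i / 2)) (diagonal fun i => sin (θ i / 2))
        (-diagonal fun i => cos (θ i / 2)) (diagonal fun i => sin (θ i / 2)) := by
  simp only [blockRotation, diagonal_neg]
  rw [← diagonal_zero, ← diagonal_one, fromBlocks_diagonal_mul_fromBlocks_diagonal]
  simp only [fromBlocks_inj, diagonal_eq_diagonal_iff, Pi.add_apply, Pi.mul_apply]
  refine ⟨fun i => by ring, fun i => by ring, fun i => ?_, fun i => ?_⟩
  · linear_combination -sin_mul_sin_half_add_cos_mul_cos_half (θ i)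
  · linear_combination sin_mul_cos_half_sub_cos_mul_sin_half (θ i)

end BlockRotation

end Matrix

theorem secular_trig_forms_general (B : ℕ) (L : Fin B → ℝ)
    (𝔸 𝔹 : Matrix (Fin B ⊕ Fin B) (Fin B ⊕ Fin B) ℂ) (k : ℂ) :
    (𝔸 * Matrix.fromBlocks 0 1
        (Matrix.diagonal fun b => Complex.sin (k * L b))
        (Matrix.diagonal fun b => Complex.cos (k * L b))
      + k • (𝔹 * Matrix.fromBlocks 1 0
        (-(Matrix.diagonal fun b => Complex.cos (k * L b)))
        (Matrix.diagonal fun b => Complex.sin (k * L b)))).det =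
    (𝔸 * Matrix.fromBlocks
        (-(Matrix.diagonal fun b => Complex.sin (k * L b / 2)))
        (Matrix.diagonal fun b => Complex.cos (k * L b / 2))
        (Matrix.diagonal fun b => Complex.sin (k * L b / 2))
        (Matrix.diagonal fun b => Complex.cos (k * L b / 2))
      + k • (𝔹 * Matrix.fromBlocks
        (Matrix.diagonal fun b => Complex.cos (k * L b / 2))
        (Matrix.diagonal fun b => Complex.sin (k * L b / 2))
        (-(Matrix.diagonal fun b => Complex.cos (k * L b / 2)))
        (Matrix.diagonal fun b => Complex.sin (k * L b / 2)))).det := by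
  rw [← fromBlocks_zero_one_sin_cos_mul_blockRotation_half,
    ← fromBlocks_one_zero_cos_sin_mul_blockRotation_half]
  conv_rhs => rw [← Matrix.mul_assoc, ← Matrix.mul_assoc, ← Matrix.smul_mul, ← Matrix.add_mul]
  rw [det_mul, det_blockRotation, mul_one]

/-- equivalence of two trigonometric forms of the secular determinant of a
quantum graph with `B` bonds of lengths `L b > 0`, vertex matching matrices `𝔸, 𝔹`
(arbitrary `2B×2B` complex matrices) and spectral parameter `k ∈ ℂ`. -/
theorem secular_trig_forms (B : ℕ) (hB : 1 ≤ B) (L : Fin B → ℝ) (hL : ∀ b, 0 < L b)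
    (𝔸 𝔹 : Matrix (Fin B ⊕ Fin B) (Fin B ⊕ Fin B) ℂ) (k : ℂ) :
    (𝔸 * Matrix.fromBlocks 0 1
        (Matrix.diagonal fun b => Complex.sin (k * L b))
        (Matrix.diagonal fun b => Complex.cos (k * L b))
      + k • (𝔹 * Matrix.fromBlocks 1 0
        (-(Matrix.diagonal fun b => Complex.cos (k * L b)))
        (Matrix.diagonal fun b => Complex.sin (k * L b)))).det =
    (𝔸 * Matrix.fromBlocks
        (-(Matrix.diagonal fun b => Complex.sin (k * L b / 2)))
        (Matrix.diagonal fun b => Complex.cos (k * L b / 2))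
        (Matrix.diagonal fun b => Complex.sin (k * L b / 2))
        (Matrix.diagonal fun b => Complex.cos (k * L b / 2))
      + k • (𝔹 * Matrix.fromBlocks
        (Matrix.diagonal fun b => Complex.cos (k * L b / 2))
        (Matrix.diagonal fun b => Complex.sin (k * L b / 2))
        (-(Matrix.diagonal fun b => Complex.cos (k * L b / 2)))
        (Matrix.diagonal fun b => Complex.sin (k * L b / 2)))).det :=
  secular_trig_forms_general B L 𝔸 𝔹 k
end

section
/- Let B ≥ 1 be an integer, let L_1,…,L_B be positive reals, let 𝔸 and 𝔹 be arbitrary 2B×2B complex matrices, and let k ∈ ℂ satisfy sin(kL_b) ≠ 0 for every b. Then det( 𝔸·fromBlocks(0, I_B, sin(k𝕃), cos(k𝕃)) + k·𝔹·fromBlocks(I_B, 0, −cos(k𝕃), sin(k𝕃)) ) = (−1)^B · (∏_{b=1}^B sin(kL_b)) · det( 𝔸 + k·𝔹·fromBlocks(−cot(k𝕃), csc(k𝕃), csc(k𝕃), −cot(k𝕃)) ). In particular, for such k, the secular equation det(𝔸·fromBlocks(0, I_B, sin(k𝕃), cos(k𝕃)) + k·𝔹·fromBlocks(I_B, 0,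 −cos(k𝕃), sin(k𝕃))) = 0 holds if and only if det(𝔸 + k·𝔹·fromBlocks(−cot(k𝕃), csc(k𝕃), csc(k𝕃), −cot(k𝕃))) = 0. -/
open Matrix BigOperators

/-- Auxiliary: determinant of the antidiagonal-style block matrix. -/
lemma det_fromBlocks_zero_one_aux (B : ℕ) (S C : Matrix (Fin B) (Fin B) ℂ) :
    (Matrix.fromBlocks (0 : Matrix (Fin B) (Fin B) ℂ) 1 S C).det = (-1) ^ B * S.det := by
  have h : Matrix.fromBlocks (0 : Matrix (Fin B) (Fin B) ℂ) 1 S C =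
      Matrix.fromBlocks (1 : Matrix (Fin B) (Fin B) ℂ) (-1) 0 1 *
        Matrix.fromBlocks (1 : Matrix (Fin B) (Fin B) ℂ) 1 1 0 *
        Matrix.fromBlocks S C 0 1 := by
    simp [Matrix.fromBlocks_multiply]
  rw [h, Matrix.det_mul, Matrix.det_mul, Matrix.det_fromBlocks_one₁₁,
    Matrix.det_fromBlocks_one₁₁, Matrix.det_fromBlocks_zero₂₁]
  simp [Matrix.det_neg]

/-- Auxiliary: the key factorization of the "incidence" block matrix. -/
lemma fromBlocks_factor_aux (B : ℕ) (s c : Fin B → ℂ) (hs : ∀ b, s b ≠ 0)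
    (h1 : ∀ b, s b ^ 2 + c b ^ 2 = 1) :
    Matrix.fromBlocks (1 : Matrix (Fin B) (Fin B) ℂ) 0 (-(Matrix.diagonal c)) (Matrix.diagonal s) =
      Matrix.fromBlocks (-(Matrix.diagonal fun b => c b / s b)) (Matrix.diagonal fun b => 1 / s b)
        (Matrix.diagonal fun b => 1 / s b) (-(Matrix.diagonal fun b => c b / s b)) *
      Matrix.fromBlocks 0 1 (Matrix.diagonal s) (Matrix.diagonal c) := by
  rw [Matrix.fromBlocks_multiply]
  have e11 : (Matrix.diagonal fun b => 1 / s b) * Matrix.diagonal s = 1 := by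
    ext i j
    rcases eq_or_ne i j with rfl | h
    · simp [Matrix.diagonal_mul_diagonal, Matrix.one_apply_eq, inv_mul_cancel₀ (hs i)]
    · simp [Matrix.diagonal_mul_diagonal, Matrix.diagonal_apply_ne _ h, Matrix.one_apply_ne h]
  have e12 : (-(Matrix.diagonal fun b => c b / s b)) * 1
      + (Matrix.diagonal fun b => 1 / s b) * Matrix.diagonal c = 0 := by
    ext i j
    rcases eq_or_ne i j with rfl | h
    · simp [Matrix.diagonal_mul_diagonal, Matrix.diagonal_apply_eq, div_eq_mul_inv]
      ring
    · simp [Matrix.diagonal_mul_diagonal, Matrix.diagonal_apply_ne _ h]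
  have e21 : (-(Matrix.diagonal fun b => c b / s b)) * Matrix.diagonal s
      = -Matrix.diagonal c := by
    ext i j
    rcases eq_or_ne i j with rfl | h
    · simp [Matrix.diagonal_mul_diagonal, Matrix.diagonal_apply_eq, div_mul_cancel₀ _ (hs i)]
    · simp [Matrix.diagonal_mul_diagonal, Matrix.diagonal_apply_ne _ h]
  have e22 : (Matrix.diagonal fun b => 1 / s b) * 1
      + (-(Matrix.diagonal fun b => c b / s b)) * Matrix.diagonal c = Matrix.diagonal s := by
    ext i j
    rcases eq_or_ne i j with rfl | h
    · simp only [Matrix.mul_one, Matrix.neg_mul, Matrix.diagonal_mul_diagonal,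
        Matrix.add_apply, Matrix.neg_apply, Matrix.diagonal_apply_eq]
      have := h1 i
      have hsi := hs i
      field_simp
      linear_combination -this
    · simp [Matrix.diagonal_mul_diagonal, Matrix.diagonal_apply_ne _ h]
  rw [Matrix.mul_zero, zero_add, Matrix.mul_zero, zero_add, e11, e12, e21, e22]

/-- for `k` with `sin (k L b) ≠ 0` for all `b`, the secular determinant
equals `(−1)^B · ∏ sin(kL_b)` times the determinant of
`𝔸 + k 𝔹 [[−cot(k𝕃), csc(k𝕃)], [csc(k𝕃), −cot(k𝕃)]]`; in particular the two forms of
the secular equation have the same solutions. -/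
theorem secular_cot_csc_form (B : ℕ) (hB : 1 ≤ B) (L : Fin B → ℝ) (hL : ∀ b, 0 < L b)
    (𝔸 𝔹 : Matrix (Fin B ⊕ Fin B) (Fin B ⊕ Fin B) ℂ) (k : ℂ)
    (hk : ∀ b, Complex.sin (k * L b) ≠ 0) :
    (𝔸 * Matrix.fromBlocks 0 1
        (Matrix.diagonal fun b => Complex.sin (k * L b))
        (Matrix.diagonal fun b => Complex.cos (k * L b))
      + k • (𝔹 * Matrix.fromBlocks 1 0
        (-(Matrix.diagonal fun b => Complex.cos (k * L b)))
        (Matrix.diagonal fun b => Complex.sin (k * L b)))).det =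
      (-1) ^ B * (∏ b : Fin B, Complex.sin (k * L b)) *
        (𝔸 + k • (𝔹 * Matrix.fromBlocks
          (-(Matrix.diagonal fun b => Complex.cos (k * L b) / Complex.sin (k * L b)))
          (Matrix.diagonal fun b => 1 / Complex.sin (k * L b))
          (Matrix.diagonal fun b => 1 / Complex.sin (k * L b))
          (-(Matrix.diagonal fun b => Complex.cos (k * L b) / Complex.sin (k * L b))))).det
    ∧
    ((𝔸 * Matrix.fromBlocks 0 1
        (Matrix.diagonal fun b => Complex.sin (k * L b))
        (Matrix.diagonal fun b => Complex.cos (k * L b))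
      + k • (𝔹 * Matrix.fromBlocks 1 0
        (-(Matrix.diagonal fun b => Complex.cos (k * L b)))
        (Matrix.diagonal fun b => Complex.sin (k * L b)))).det = 0 ↔
      (𝔸 + k • (𝔹 * Matrix.fromBlocks
          (-(Matrix.diagonal fun b => Complex.cos (k * L b) / Complex.sin (k * L b)))
          (Matrix.diagonal fun b => 1 / Complex.sin (k * L b))
          (Matrix.diagonal fun b => 1 / Complex.sin (k * L b))
          (-(Matrix.diagonal fun b => Complex.cos (k * L b) / Complex.sin (k * L b))))).det
        = 0) := by
  set s : Fin B → ℂ := fun b => Complex.sin (k * L b) with hs_def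
  set c : Fin B → ℂ := fun b => Complex.cos (k * L b) with hc_def
  have h1 : ∀ b, s b ^ 2 + c b ^ 2 = 1 := fun b => Complex.sin_sq_add_cos_sq (k * L b)
  have hfac := fromBlocks_factor_aux B s c hk h1
  set M : Matrix (Fin B ⊕ Fin B) (Fin B ⊕ Fin B) ℂ :=
    Matrix.fromBlocks (-(Matrix.diagonal fun b => c b / s b)) (Matrix.diagonal fun b => 1 / s b)
      (Matrix.diagonal fun b => 1 / s b) (-(Matrix.diagonal fun b => c b / s b)) with hM
  set P : Matrix (Fin B ⊕ Fin B) (Fin B ⊕ Fin B) ℂ :=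
    Matrix.fromBlocks 0 1 (Matrix.diagonal s) (Matrix.diagonal c) with hP
  have key : 𝔸 * P + k • (𝔹 * Matrix.fromBlocks 1 0 (-(Matrix.diagonal c)) (Matrix.diagonal s))
      = (𝔸 + k • (𝔹 * M)) * P := by
    rw [hfac, Matrix.add_mul, Matrix.smul_mul, Matrix.mul_assoc]
  have hdetP : P.det = (-1) ^ B * ∏ b : Fin B, s b := by
    rw [hP, det_fromBlocks_zero_one_aux, Matrix.det_diagonal]
  have hmain : (𝔸 * P + k • (𝔹 * Matrix.fromBlocks 1 0 (-(Matrix.diagonal c))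
      (Matrix.diagonal s))).det = (-1) ^ B * (∏ b : Fin B, s b) * (𝔸 + k • (𝔹 * M)).det := by
    rw [key, Matrix.det_mul, hdetP]
    ring
  refine ⟨hmain, ?_⟩
  rw [hmain]
  have hne : ((-1 : ℂ)) ^ B * (∏ b : Fin B, s b) ≠ 0 := by
    apply mul_ne_zero
    · exact pow_ne_zero _ (by norm_num)
    · exact Finset.prod_ne_zero_iff.mpr fun b _ => hk b
  constructor
  · intro h
    rcases mul_eq_zero.mp h with h' | h'
    · exact absurd h' hne
    · exact h'
  · intro h
    rw [h, mul_zero]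
end

section
/- Let B ≥ 1 be an integer, let L_1,…,L_B be positive reals, let 𝔸 and 𝔹 be arbitrary 2B×2B complex matrices, and let k ∈ ℂ. Then det( 𝔸·fromBlocks(e^{−ik𝕃/2}, e^{ik𝕃/2}, e^{ik𝕃/2}, e^{−ik𝕃/2}) + i·k·𝔹·fromBlocks(e^{−ik𝕃/2}, −e^{ik𝕃/2}, −e^{ik𝕃/2}, e^{−ik𝕃/2}) ) = (2i)^B · det( 𝔸·fromBlocks(−sin(k𝕃/2), cos(k𝕃/2), sin(k𝕃/2), cos(k𝕃/2)) + k·𝔹·fromBlocks(cos(k𝕃/2), sin(k𝕃/2), −cos(k𝕃/2), sin(k𝕃/2)) ). In particular, the exponential and trigonometric forms of the secular equation have the same zero set. -/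
open Matrix BigOperators

/-!
Writing `e^{∓iθ} = cos θ ∓ i sin θ` blockwise, both exponential block matrices are the
corresponding trigonometric block matrices multiplied on the right by the same constant matrix
`U = [[i, -i], [1, 1]]` (the second one up to the factor `i`, which combines with the `ik` in
front of it to give `k`). Hence the exponential secular matrix is the trigonometric one times
`U`, and `det U = (2i)^B`.
-/

namespace Matrix

variable {n R : Type*} [Fintype n] [DecidableEq n] [CommRing R]

def trigToExp (c : R) : Matrix (n ⊕ n) (n ⊕ n) R :=
  fromBlocks (c • 1) (-c • 1) 1 1

theorem det_trigToExp (c : R) : (trigToExp c : Matrix (n ⊕ n) (n ⊕ n) R).det =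
    (2 * c) ^ Fintype.card n := by
  rw [trigToExp, det_fromBlocks_one₂₂, mul_one, neg_smul, sub_neg_eq_add, ← two_smul R,
    smul_smul, det_smul, det_one, mul_one]

theorem fromBlocks_neg_mul_trigToExp (C S : Matrix n n R) (c : R) :
    fromBlocks (-S) C S C * trigToExp c =
      fromBlocks (C - c • S) (C + c • S) (C + c • S) (C - c • S) := by
  simp only [trigToExp, fromBlocks_multiply, Matrix.mul_smul, Matrix.mul_one]
  congr 1 <;> module

theorem fromBlocks_mul_trigToExp (C S : Matrix n n R) {c : R} (hc : c * c = -1) :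
    fromBlocks C S (-C) S * trigToExp c =
      c • fromBlocks (C - c • S) (-(C + c • S)) (-(C + c • S)) (C - c • S) := by
  simp only [trigToExp, fromBlocks_multiply, fromBlocks_smul, Matrix.mul_smul, Matrix.mul_one,
    smul_sub, smul_neg, smul_add, smul_smul, hc]
  congr 1 <;> module

theorem secular_mul_trigToExp (𝔸 𝔹 : Matrix (n ⊕ n) (n ⊕ n) R) (C S : Matrix n n R)
    {c : R} (hc : c * c = -1) (k : R) :
    𝔸 * fromBlocks (C - c • S) (C + c • S) (C + c • S) (C - c • S)
        + (c * k) • (𝔹 * fromBlocks (C - c • S) (-(C + c • S)) (-(C + c • S)) (C - c • S)) =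
      (𝔸 * fromBlocks (-S) C S C + k • (𝔹 * fromBlocks C S (-C) S)) * trigToExp c := by
  rw [add_mul, smul_mul, Matrix.mul_assoc, Matrix.mul_assoc, fromBlocks_neg_mul_trigToExp,
    fromBlocks_mul_trigToExp C S hc, Matrix.mul_smul, smul_smul, mul_comm c k]

end Matrix

namespace Complex

variable {n : Type*} [DecidableEq n]

theorem diagonal_exp_I_mul (θ : n → ℂ) :
    diagonal (fun b => exp (I * θ b)) =
      diagonal (fun b => cos (θ b)) + I • diagonal (fun b => sin (θ b)) := by
  ext i j
  by_cases h : i = j <;> simp [h, mul_comm I, exp_mul_I]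

theorem diagonal_exp_neg_I_mul (θ : n → ℂ) :
    diagonal (fun b => exp (-(I * θ b))) =
      diagonal (fun b => cos (θ b)) - I • diagonal (fun b => sin (θ b)) := by
  simpa [sub_eq_add_neg, ← smul_neg, diagonal_neg] using diagonal_exp_I_mul (fun b => -θ b)

end Complex

theorem secular_exp_trig_forms_general (B : ℕ) (L : Fin B → ℝ)
    (𝔸 𝔹 : Matrix (Fin B ⊕ Fin B) (Fin B ⊕ Fin B) ℂ) (k : ℂ) :
    (𝔸 * Matrix.fromBlocks
        (Matrix.diagonal fun b => Complex.exp (-(Complex.I * k * L b / 2)))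
        (Matrix.diagonal fun b => Complex.exp (Complex.I * k * L b / 2))
        (Matrix.diagonal fun b => Complex.exp (Complex.I * k * L b / 2))
        (Matrix.diagonal fun b => Complex.exp (-(Complex.I * k * L b / 2)))
      + (Complex.I * k) • (𝔹 * Matrix.fromBlocks
        (Matrix.diagonal fun b => Complex.exp (-(Complex.I * k * L b / 2)))
        (-(Matrix.diagonal fun b => Complex.exp (Complex.I * k * L b / 2)))
        (-(Matrix.diagonal fun b => Complex.exp (Complex.I * k * L b / 2)))
        (Matrix.diagonal fun b => Complex.exp (-(Complex.I * k * L b / 2))))).det =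
      (2 * Complex.I) ^ B *
      (𝔸 * Matrix.fromBlocks
        (-(Matrix.diagonal fun b => Complex.sin (k * L b / 2)))
        (Matrix.diagonal fun b => Complex.cos (k * L b / 2))
        (Matrix.diagonal fun b => Complex.sin (k * L b / 2))
        (Matrix.diagonal fun b => Complex.cos (k * L b / 2))
      + k • (𝔹 * Matrix.fromBlocks
        (Matrix.diagonal fun b => Complex.cos (k * L b / 2))
        (Matrix.diagonal fun b => Complex.sin (k * L b / 2))
        (-(Matrix.diagonal fun b => Complex.cos (k * L b / 2)))
        (Matrix.diagonal fun b => Complex.sin (k * L b / 2)))).det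
    ∧
    ((𝔸 * Matrix.fromBlocks
        (Matrix.diagonal fun b => Complex.exp (-(Complex.I * k * L b / 2)))
        (Matrix.diagonal fun b => Complex.exp (Complex.I * k * L b / 2))
        (Matrix.diagonal fun b => Complex.exp (Complex.I * k * L b / 2))
        (Matrix.diagonal fun b => Complex.exp (-(Complex.I * k * L b / 2)))
      + (Complex.I * k) • (𝔹 * Matrix.fromBlocks
        (Matrix.diagonal fun b => Complex.exp (-(Complex.I * k * L b / 2)))
        (-(Matrix.diagonal fun b => Complex.exp (Complex.I * k * L b / 2)))
        (-(Matrix.diagonal fun b => Complex.exp (Complex.I * k * L b / 2)))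
        (Matrix.diagonal fun b => Complex.exp (-(Complex.I * k * L b / 2))))).det = 0 ↔
      (𝔸 * Matrix.fromBlocks
        (-(Matrix.diagonal fun b => Complex.sin (k * L b / 2)))
        (Matrix.diagonal fun b => Complex.cos (k * L b / 2))
        (Matrix.diagonal fun b => Complex.sin (k * L b / 2))
        (Matrix.diagonal fun b => Complex.cos (k * L b / 2))
      + k • (𝔹 * Matrix.fromBlocks
        (Matrix.diagonal fun b => Complex.cos (k * L b / 2))
        (Matrix.diagonal fun b => Complex.sin (k * L b / 2))
        (-(Matrix.diagonal fun b => Complex.cos (k * L b / 2)))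
        (Matrix.diagonal fun b => Complex.sin (k * L b / 2)))).det = 0) := by
  have hθ : ∀ b, Complex.I * k * L b / 2 = Complex.I * (k * L b / 2) := fun b => by ring
  simp only [hθ, Complex.diagonal_exp_I_mul, Complex.diagonal_exp_neg_I_mul]
  have hdet := congrArg det <|
    secular_mul_trigToExp 𝔸 𝔹 (diagonal fun b => Complex.cos (k * L b / 2))
      (diagonal fun b => Complex.sin (k * L b / 2)) Complex.I_mul_I k
  rw [det_mul, det_trigToExp, Fintype.card_fin, mul_comm _ ((2 * Complex.I) ^ B)] at hdet
  have h2I : (2 * Complex.I) ^ B ≠ 0 := pow_ne_zero _ (by simp)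
  exact ⟨hdet, by rw [hdet, mul_eq_zero, or_iff_right h2I]⟩

/-- the exponential form of the secular determinant equals `(2i)^B` times the
trigonometric form; in particular the two secular equations have the same zero set. -/
theorem secular_exp_trig_forms (B : ℕ) (hB : 1 ≤ B) (L : Fin B → ℝ) (hL : ∀ b, 0 < L b)
    (𝔸 𝔹 : Matrix (Fin B ⊕ Fin B) (Fin B ⊕ Fin B) ℂ) (k : ℂ) :
    (𝔸 * Matrix.fromBlocks
        (Matrix.diagonal fun b => Complex.exp (-(Complex.I * k * L b / 2)))
        (Matrix.diagonal fun b => Complex.exp (Complex.I * k * L b / 2))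
        (Matrix.diagonal fun b => Complex.exp (Complex.I * k * L b / 2))
        (Matrix.diagonal fun b => Complex.exp (-(Complex.I * k * L b / 2)))
      + (Complex.I * k) • (𝔹 * Matrix.fromBlocks
        (Matrix.diagonal fun b => Complex.exp (-(Complex.I * k * L b / 2)))
        (-(Matrix.diagonal fun b => Complex.exp (Complex.I * k * L b / 2)))
        (-(Matrix.diagonal fun b => Complex.exp (Complex.I * k * L b / 2)))
        (Matrix.diagonal fun b => Complex.exp (-(Complex.I * k * L b / 2))))).det =
      (2 * Complex.I) ^ B *
      (𝔸 * Matrix.fromBlocks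
        (-(Matrix.diagonal fun b => Complex.sin (k * L b / 2)))
        (Matrix.diagonal fun b => Complex.cos (k * L b / 2))
        (Matrix.diagonal fun b => Complex.sin (k * L b / 2))
        (Matrix.diagonal fun b => Complex.cos (k * L b / 2))
      + k • (𝔹 * Matrix.fromBlocks
        (Matrix.diagonal fun b => Complex.cos (k * L b / 2))
        (Matrix.diagonal fun b => Complex.sin (k * L b / 2))
        (-(Matrix.diagonal fun b => Complex.cos (k * L b / 2)))
        (Matrix.diagonal fun b => Complex.sin (k * L b / 2)))).det
    ∧
    ((𝔸 * Matrix.fromBlocks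
        (Matrix.diagonal fun b => Complex.exp (-(Complex.I * k * L b / 2)))
        (Matrix.diagonal fun b => Complex.exp (Complex.I * k * L b / 2))
        (Matrix.diagonal fun b => Complex.exp (Complex.I * k * L b / 2))
        (Matrix.diagonal fun b => Complex.exp (-(Complex.I * k * L b / 2)))
      + (Complex.I * k) • (𝔹 * Matrix.fromBlocks
        (Matrix.diagonal fun b => Complex.exp (-(Complex.I * k * L b / 2)))
        (-(Matrix.diagonal fun b => Complex.exp (Complex.I * k * L b / 2)))
        (-(Matrix.diagonal fun b => Complex.exp (Complex.I * k * L b / 2)))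
        (Matrix.diagonal fun b => Complex.exp (-(Complex.I * k * L b / 2))))).det = 0 ↔
      (𝔸 * Matrix.fromBlocks
        (-(Matrix.diagonal fun b => Complex.sin (k * L b / 2)))
        (Matrix.diagonal fun b => Complex.cos (k * L b / 2))
        (Matrix.diagonal fun b => Complex.sin (k * L b / 2))
        (Matrix.diagonal fun b => Complex.cos (k * L b / 2))
      + k • (𝔹 * Matrix.fromBlocks
        (Matrix.diagonal fun b => Complex.cos (k * L b / 2))
        (Matrix.diagonal fun b => Complex.sin (k * L b / 2))
        (-(Matrix.diagonal fun b => Complex.cos (k * L b / 2)))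
        (Matrix.diagonal fun b => Complex.sin (k * L b / 2)))).det = 0) :=
  secular_exp_trig_forms_general B L 𝔸 𝔹 k
end

section
/- Let B ≥ 2 be an integer and let 𝔸, 𝔹 be the Neumann matching matrices of size B×B. For any positive reals L_1,…,L_B, with 𝕃 = diag(L_1,…,L_B), one has det(𝔸·𝕃 − 𝔹) = −(∏_{b=1}^B L_b)·(∑_{b=1}^B L_b^{−1}). -/
open Matrix BigOperators

/-- The Neumann matching matrix `𝔸` of size `B×B`: rows `0,…,B−2` (0-indexed) have a `1` on
the diagonal and a `−1` on the superdiagonal; the last row is zero. -/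
def neumannA (B : ℕ) : Matrix (Fin B) (Fin B) ℝ :=
  Matrix.of fun i j =>
    if (i : ℕ) + 1 < B then
      (if j = i then 1 else if (j : ℕ) = (i : ℕ) + 1 then -1 else 0)
    else 0

/-- The Neumann matching matrix `𝔹` of size `B×B`: every entry of the last row is `1`,
all other entries are `0`. -/
def neumannB (B : ℕ) : Matrix (Fin B) (Fin B) ℝ :=
  Matrix.of fun i _ => if (i : ℕ) + 1 = B then 1 else 0

/-!
Write `𝔸𝕃 − 𝔹 = (𝔸 − 𝔹𝕃⁻¹)𝕃`. The rows of `𝔸 − 𝔹𝕃⁻¹` are `e_b − e_{b+1}` followed by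
`−(L_1⁻¹, …, L_B⁻¹)`; right multiplication by the upper unitriangular all-ones matrix (which
replaces each column by the sum of the columns up to it) turns it into a lower triangular matrix
with diagonal `1, …, 1, −∑ L_b⁻¹`.
-/

def upperOnes (n : ℕ) : Matrix (Fin n) (Fin n) ℝ :=
  of fun k j => if k ≤ j then 1 else 0

lemma det_upperOnes (n : ℕ) : (upperOnes n).det = 1 := by
  rw [det_of_isUpperTriangular fun i j (h : j < i) => by simp [upperOnes, not_le.2 h]]
  simp [upperOnes]

lemma neumannA_apply_of_lt {B : ℕ} {i : Fin B} (h : (i : ℕ) + 1 < B) (k : Fin B) :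
    neumannA B i k = (if k = i then 1 else 0) - if k = ⟨i + 1, h⟩ then 1 else 0 := by
  simp only [neumannA, of_apply, if_pos h, Fin.ext_iff]
  split_ifs <;> first | omega | norm_num

lemma neumannA_mul_upperOnes (B : ℕ) :
    neumannA B * upperOnes B =
      of fun i j : Fin B => if (i : ℕ) + 1 < B ∧ i = j then (1 : ℝ) else 0 := by
  ext i j
  by_cases h : (i : ℕ) + 1 < B
  · simp only [mul_apply, neumannA_apply_of_lt h, sub_mul, Finset.sum_sub_distrib, ite_mul,
      one_mul, zero_mul, Finset.sum_ite_eq', Finset.mem_univ, if_true, upperOnes, of_apply, h,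
      true_and]
    simp only [Fin.le_def, Fin.ext_iff]
    split_ifs <;> first | omega | norm_num
  · simp [mul_apply, neumannA, h]

lemma neumannB_mul_diagonal_mul_upperOnes (B : ℕ) (w : Fin B → ℝ) :
    neumannB B * diagonal w * upperOnes B =
      of fun i j : Fin B => if (i : ℕ) + 1 = B then ∑ k, if k ≤ j then w k else 0 else 0 := by
  ext i j
  rw [mul_apply]
  simp only [mul_diagonal, neumannB, upperOnes, of_apply]
  split_ifs <;> simp

lemma det_neumannA_sub_neumannB_mul_diagonal (n : ℕ) (w : Fin (n + 1) → ℝ) :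
    (neumannA (n + 1) - neumannB (n + 1) * diagonal w).det = -∑ k, w k := by
  set N := (neumannA (n + 1) - neumannB (n + 1) * diagonal w) * upperOnes (n + 1) with hN
  rw [sub_mul, neumannA_mul_upperOnes, neumannB_mul_diagonal_mul_upperOnes] at hN
  have hlower : N.IsLowerTriangular := fun i j (hij : i < j) => by
    have : (i : ℕ) ≠ n := by omega
    simp [hN, hij.ne, this]
  calc (neumannA (n + 1) - neumannB (n + 1) * diagonal w).det
      = N.det := by rw [det_mul, det_upperOnes, mul_one]
    _ = ∏ i, N i i := det_of_isLowerTriangular N hlower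
    _ = -∑ k, w k := by
      rw [Fin.prod_univ_castSucc, Finset.prod_eq_one fun i _ => by simp [hN, i.isLt.ne]]
      simp [hN, Fin.le_last]

/-- `det(𝔸·𝕃 − 𝔹) = −(∏ L_b)·(∑ L_b⁻¹)` for the Neumann matching matrices. -/
theorem neumann_det_AL_sub_B (B : ℕ) (hB : 2 ≤ B) (L : Fin B → ℝ) (hL : ∀ b, 0 < L b) :
    (neumannA B * Matrix.diagonal L - neumannB B).det =
      -(∏ b : Fin B, L b) * (∑ b : Fin B, (L b)⁻¹) := by
  obtain ⟨n, rfl⟩ : ∃ n, B = n + 1 := ⟨B - 1, by omega⟩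
  have hfactor : neumannA (n + 1) * diagonal L - neumannB (n + 1) =
      (neumannA (n + 1) - neumannB (n + 1) * diagonal L⁻¹) * diagonal L := by
    have hinv : diagonal L⁻¹ * diagonal L = 1 := by
      rw [diagonal_mul_diagonal, ← diagonal_one]
      exact congrArg diagonal (funext fun b => inv_mul_cancel₀ (hL b).ne')
    rw [sub_mul, mul_assoc, hinv, mul_one]
  rw [hfactor, det_mul, det_neumannA_sub_neumannB_mul_diagonal, det_diagonal]
  simp only [Pi.inv_apply]
  ring
end

section
/- Let B ≥ 2 be an integer and let 𝔸, 𝔹 be the Neumann matching matrices of size B×B. Then det(𝔸 − 𝔹) = −B. -/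
open Matrix

/-!
Multiplying `𝔸 - 𝔹` on the right by the upper unitriangular all-ones matrix, which has
determinant `1`, replaces each column by the sum of the columns up to it. The rows
`e_i - e_{i+1}` then telescope to `e_i`, and the last row `-(1, …, 1)` becomes
`-(1, 2, …, B)`. The result is lower triangular with diagonal `(1, …, 1, -B)`.
-/

open Finset

theorem Matrix.det_of_sum_Iic {n R : Type*} [Fintype n] [LinearOrder n] [LocallyFiniteOrderBot n]
    [CommRing R] (A : Matrix n n R) :
    (of fun i j => ∑ k ∈ Iic j, A i k).det = A.det := by
  let U : Matrix n n R := of fun k j => if k ≤ j then 1 else 0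
  have hU : U.det = 1 := by
    rw [det_of_isUpperTriangular (M := U) fun i j (hji : j < i) => if_neg hji.not_ge]
    exact prod_eq_one fun i _ => if_pos le_rfl
  have hAU : (of fun i j => ∑ k ∈ Iic j, A i k) = A * U := by
    ext i j
    simp [U, mul_apply, ← sum_filter, filter_ge_eq_Iic]
  rw [hAU, det_mul, hU, mul_one]

theorem neumannA_sum_Iic (B : ℕ) (i j : Fin B) :
    ∑ k ∈ Iic j, neumannA B i k = if (i : ℕ) + 1 < B ∧ i = j then 1 else 0 := by
  by_cases hi : (i : ℕ) + 1 < B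
  · set i' : Fin B := ⟨i + 1, hi⟩
    have hrow : ∀ k, neumannA B i k = (if k = i then 1 else 0) - (if k = i' then 1 else 0) := by
      intro k
      simp only [neumannA, of_apply, if_pos hi, i', Fin.ext_iff]
      split_ifs <;> first | omega | norm_num
    simp only [hrow, sum_sub_distrib, sum_ite_eq']
    simp only [mem_Iic, Fin.le_def, i', Fin.ext_iff]
    split_ifs <;> first | omega | norm_num
  · simp [neumannA, hi]

theorem neumannB_sum_Iic (B : ℕ) (i j : Fin B) :
    ∑ k ∈ Iic j, neumannB B i k = if (i : ℕ) + 1 = B then (j : ℝ) + 1 else 0 := by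
  split_ifs with hi <;> simp [neumannB, hi]

theorem neumannA_sub_neumannB_sum_Iic (B : ℕ) (i j : Fin B) :
    ∑ k ∈ Iic j, (neumannA B - neumannB B) i k =
      if (i : ℕ) + 1 = B then -((j : ℝ) + 1) else if i = j then 1 else 0 := by
  simp only [Matrix.sub_apply, sum_sub_distrib, neumannA_sum_Iic, neumannB_sum_Iic, Fin.ext_iff]
  split_ifs <;> first | omega | ring

/-- `det(𝔸 − 𝔹) = −B` for the Neumann matching matrices. -/
theorem neumann_det_A_sub_B (B : ℕ) (hB : 2 ≤ B) :
    (neumannA B - neumannB B).det = -(B : ℝ) := by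
  obtain ⟨n, rfl⟩ : ∃ n, B = n + 1 := ⟨B - 1, by omega⟩
  set P := of fun i j => ∑ k ∈ Iic j, (neumannA (n + 1) - neumannB (n + 1)) i k
  have hP : P.IsLowerTriangular := by
    intro i j (hij : i < j)
    have hi : (i : ℕ) + 1 ≠ n + 1 := by omega
    simp only [P, of_apply, neumannA_sub_neumannB_sum_Iic, if_neg hi, if_neg hij.ne]
  rw [← det_of_sum_Iic, det_of_isLowerTriangular _ hP, Fin.prod_univ_castSucc]
  have hlt (i : Fin n) : (i : ℕ) ≠ n := i.isLt.ne
  simp only [P, of_apply, neumannA_sub_neumannB_sum_Iic]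
  simp [hlt]
end

section
/- Let B ≥ 2 be an integer, let 𝔸, 𝔹 be the Neumann matching matrices of size B×B, let L_1,…,L_B be positive reals, and let t > 0. Then the determinant of the 2B×2B block matrix with blocks [[𝔸, 𝔹], [I_B, (1/t)·diag(tanh(tL_1),…,tanh(tL_B))]] equals −t^{−(B−1)} · ∑_{b=1}^B ∏_{j≠b} tanh(tL_j). -/
open Matrix BigOperators

lemma det_rowdiff (n : ℕ) (hn : 1 ≤ n) (f : Fin n → ℝ)
    (M : Matrix (Fin n) (Fin n) ℝ)
    (hM : ∀ i j, M i j = if (i : ℕ) + 1 < n then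
      (if j = i then 1 else if (j : ℕ) = (i : ℕ) + 1 then -1 else 0) else f j) :
    M.det = ∑ j, f j := by
  classical
  set U : Matrix (Fin n) (Fin n) ℝ := Matrix.of fun k j => if k ≤ j then (1 : ℝ) else 0 with hU
  have hUtri : U.BlockTriangular id := by
    intro i j hij
    have : ¬ i ≤ j := not_le.mpr hij
    simp only [U, Matrix.of_apply]
    rw [if_neg this]
  have hUdet : U.det = 1 := by
    rw [Matrix.det_of_upperTriangular hUtri]
    simp [U]
  have hP : ∀ i j, (M * U) i j =
      if (i : ℕ) + 1 < n then (if j = i then (1 : ℝ) else 0)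
      else ∑ k ∈ Finset.univ.filter (· ≤ j), f k := by
    intro i j
    have hmul : (M * U) i j = ∑ k ∈ Finset.univ.filter (· ≤ j), M i k := by
      rw [Matrix.mul_apply]
      rw [Finset.sum_filter]
      congr 1; funext k
      by_cases h : k ≤ j <;> simp [U, h]
    rw [hmul]
    by_cases hi : (i : ℕ) + 1 < n
    · set i1 : Fin n := ⟨(i : ℕ) + 1, hi⟩ with hi1
      have hi1v : (i1 : ℕ) = (i : ℕ) + 1 := rfl
      have hii1 : i ≠ i1 := by
        intro h
        have := congrArg (Fin.val) h
        omega
      have hrow : ∀ k, M i k = (if k = i then (1 : ℝ) else 0) + (if k = i1 then -1 else 0) := by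
        intro k
        rw [hM i k, if_pos hi]
        have hk1 : ((k : ℕ) = (i : ℕ) + 1) ↔ k = i1 := by
          rw [Fin.ext_iff, hi1v]
        by_cases h1 : k = i
        · have hki1 : k ≠ i1 := h1 ▸ hii1
          rw [if_pos h1, if_pos h1, if_neg hki1, add_zero]
        · by_cases h2 : k = i1
          · rw [if_neg h1, if_pos ((hk1).mpr h2), if_neg h1, if_pos h2, zero_add]
          · rw [if_neg h1, if_neg (fun h => h2 (hk1.mp h)), if_neg h1, if_neg h2, add_zero]
      rw [if_pos hi]
      simp_rw [hrow]
      rw [Finset.sum_add_distrib, Finset.sum_ite_eq' _ i, Finset.sum_ite_eq' _ i1]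
      simp only [Finset.mem_filter, Finset.mem_univ, true_and]
      have hle : (i ≤ j) ↔ (i : ℕ) ≤ (j : ℕ) := Fin.le_def
      have hle1 : (i1 ≤ j) ↔ (i : ℕ) + 1 ≤ (j : ℕ) := by rw [Fin.le_def, hi1v]
      have hji : (j = i) ↔ (j : ℕ) = (i : ℕ) := Fin.ext_iff
      by_cases h1 : i ≤ j
      · by_cases h2 : i1 ≤ j
        · rw [if_pos h1, if_pos h2, if_neg (fun h => by rw [hji] at h; rw [hle1] at h2; omega)]
          norm_num
        · rw [if_pos h1, if_neg h2,
            if_pos (hji.mpr (by rw [hle] at h1; rw [hle1] at h2; omega)), add_zero]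
      · have h2 : ¬ i1 ≤ j := by
          rw [hle] at h1; rw [hle1]; omega
        rw [if_neg h1, if_neg h2, if_neg (fun h => by rw [hji] at h; rw [hle] at h1; omega)]
        norm_num
    · rw [if_neg hi]
      congr 1; funext k
      rw [hM i k, if_neg hi]
  have hPtri : (M * U).BlockTriangular OrderDual.toDual := by
    intro i j hij
    have hij' : i < j := hij
    rw [hP]
    have hi : (i : ℕ) + 1 < n := by
      have := j.isLt
      have := Fin.lt_def.mp hij'
      omega
    rw [if_pos hi, if_neg (ne_of_gt hij')]
  have hlast : ∑ j, f j = (M * U) ⟨n - 1, by omega⟩ ⟨n - 1, by omega⟩ := by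
    rw [hP]
    have : ¬ ((⟨n - 1, by omega⟩ : Fin n) : ℕ) + 1 < n := by
      show ¬ (n - 1) + 1 < n; omega
    rw [if_neg this]
    have : Finset.univ.filter (· ≤ (⟨n - 1, by omega⟩ : Fin n)) = Finset.univ := by
      apply Finset.eq_univ_iff_forall.mpr
      intro k
      simp only [Finset.mem_filter, Finset.mem_univ, true_and]
      show (k : ℕ) ≤ n - 1
      have := k.isLt
      omega
    rw [this]
  calc M.det = M.det * U.det := by rw [hUdet, mul_one]
    _ = (M * U).det := (Matrix.det_mul M U).symm
    _ = ∏ i, (M * U) i i := Matrix.det_of_lowerTriangular _ hPtri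
    _ = ∑ j, f j := by
        rw [hlast]
        apply Finset.prod_eq_single
        · intro i _ hne
          rw [hP]
          have hi : (i : ℕ) + 1 < n := by
            have := i.isLt
            have : (i : ℕ) ≠ n - 1 := fun h => hne (Fin.ext (show (i : ℕ) = n - 1 by omega))
            omega
          rw [if_pos hi, if_pos rfl]
        · intro h; exact absurd (Finset.mem_univ _) h

/-- for the Neumann matching matrices, positive bond lengths `L_b` and `t > 0`,
`det [[𝔸, 𝔹], [I, (1/t)·diag(tanh(tL_b))]] = −t^{−(B−1)} ∑_b ∏_{j≠b} tanh(tL_j)`. -/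
theorem neumann_block_det_tanh (B : ℕ) (hB : 2 ≤ B) (L : Fin B → ℝ) (hL : ∀ b, 0 < L b)
    (t : ℝ) (ht : 0 < t) :
    (Matrix.fromBlocks (neumannA B) (neumannB B) 1
        ((1 / t) • Matrix.diagonal fun b => Real.tanh (t * L b))).det =
      -(t ^ (B - 1))⁻¹ *
        ∑ b : Fin B, ∏ j ∈ Finset.univ.erase b, Real.tanh (t * L j) := by
  classical
  have htne : t ≠ 0 := ne_of_gt ht
  set d : Fin B → ℝ := fun b => Real.tanh (t * L b) / t with hd_def
  have hd0 : ∀ b, d b ≠ 0 := by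
    intro b
    have htanh : 0 < Real.tanh (t * L b) := by
      rw [Real.tanh_eq_sinh_div_cosh]
      exact div_pos (Real.sinh_pos_iff.mpr (mul_pos ht (hL b))) (Real.cosh_pos _)
    exact ne_of_gt (div_pos htanh ht)
  have hD : ((1 / t) • Matrix.diagonal fun b => Real.tanh (t * L b)) = Matrix.diagonal d := by
    have hvec : ((1 / t) • fun b => Real.tanh (t * L b)) = d := by
      funext b
      show (1 / t) * Real.tanh (t * L b) = Real.tanh (t * L b) / t
      rw [mul_comm, mul_one_div]
    rw [← Matrix.diagonal_smul, hvec]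
  haveI hinvd : Invertible d :=
    ⟨fun j => (d j)⁻¹, by funext j; exact inv_mul_cancel₀ (hd0 j),
      by funext j; exact mul_inv_cancel₀ (hd0 j)⟩
  haveI : Invertible (Matrix.diagonal d) := Matrix.diagonalInvertible d
  rw [hD, Matrix.det_fromBlocks₂₂]
  rw [Matrix.invOf_diagonal_eq, Matrix.mul_one]
  have hinv : (⅟d : Fin B → ℝ) = fun j => (d j)⁻¹ :=
    invOf_eq_right_inv (by funext j; exact mul_inv_cancel₀ (hd0 j))
  rw [hinv]
  set N := neumannA B - neumannB B * Matrix.diagonal (fun j => (d j)⁻¹) with hN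
  have hNdet : N.det = ∑ j, -(d j)⁻¹ := by
    apply det_rowdiff B (by omega)
    intro i j
    rw [hN]
    simp only [Matrix.sub_apply, Matrix.mul_diagonal, neumannA, neumannB, Matrix.of_apply]
    by_cases hi : (i : ℕ) + 1 < B
    · have : (i : ℕ) + 1 ≠ B := by omega
      simp [hi, this]
    · have : (i : ℕ) + 1 = B := by have := i.isLt; omega
      simp [hi, this]
  rw [hNdet, Matrix.det_diagonal]
  rw [Finset.mul_sum, Finset.mul_sum]
  refine Finset.sum_congr rfl fun b _ => ?_
  have hprod : (∏ i, d i) = d b * ∏ j ∈ Finset.univ.erase b, d j :=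
    (Finset.mul_prod_erase Finset.univ d (Finset.mem_univ b)).symm
  have herase : ∏ j ∈ Finset.univ.erase b, d j =
      (∏ j ∈ Finset.univ.erase b, Real.tanh (t * L j)) / t ^ (B - 1) := by
    rw [hd_def]
    rw [Finset.prod_div_distrib, Finset.prod_const]
    congr 2
    rw [Finset.card_erase_of_mem (Finset.mem_univ b), Finset.card_univ, Fintype.card_fin]
  rw [hprod, herase, mul_comm (d b), mul_assoc, mul_neg, mul_inv_cancel₀ (hd0 b), mul_neg_one,
    neg_mul, div_eq_mul_inv, mul_comm]
end

section
/- Let a and b be nonnegative real numbers, not both zero. Then ∫_0^∞ x · (a·sech²(x) − b·csch²(x)) / (a·tanh(x) + b·coth(x)) dx = θ·(θ − π) + π²/8, where θ = arcsin(√(b/(a+b))). -/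
/-!
The integrand is `x` times the logarithmic derivative of `a tanh x + b coth x`. With
`q = exp (-2x)` and `cos 2θ = (a - b) / (a + b)` this logarithmic derivative is the Dirichlet series
`4 ∑ cos (2nθ) qⁿ - 4 ∑ q²ⁿ` (real part of a geometric series). Integrating termwise against `x`,
where `∫ x e^{-cx} = 1 / c²`, leaves `∑ cos (2nθ) / n² - ζ(2) / 4`, and the Fourier series of the
Bernoulli polynomial `B₂` evaluates the first sum to `θ² - πθ + π² / 6`.
-/

open Real MeasureTheory Set

lemma hasSum_integral_mul_of_hasSum_exp {ι : Type*} [Countable ι] {a p : ι → ℝ} {f : ℝ → ℝ}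
    (hp : ∀ i, 0 < p i) (hf : ∀ t ∈ Ioi 0, HasSum (fun i ↦ a i * rexp (-p i * t)) (f t))
    (h_sum : Summable fun i ↦ |a i| / p i ^ 2) :
    HasSum (fun i ↦ a i / p i ^ 2) (∫ t in Ioi 0, t * f t) := by
  have h := hasSum_mellin (a := fun i ↦ (a i : ℂ)) (F := fun t ↦ (f t : ℂ)) (s := 2)
    (fun i ↦ Or.inr (hp i)) (by norm_num)
    (fun t ht ↦ by exact_mod_cast Complex.hasSum_ofReal.mpr (hf t ht))
    (by simpa using h_sum)
  have hmellin : mellin (fun t ↦ (f t : ℂ)) 2 = ((∫ t in Ioi 0, t * f t : ℝ) : ℂ) := by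
    rw [mellin, ← integral_complex_ofReal]
    refine setIntegral_congr_fun measurableSet_Ioi fun t _ ↦ ?_
    norm_num
  rw [hmellin] at h
  refine Complex.hasSum_ofReal.mp (h.congr_fun fun i ↦ ?_)
  norm_num

lemma hasSum_cos_div_sq {φ : ℝ} (hφ : φ ∈ Icc 0 (2 * π)) :
    HasSum (fun n : ℕ ↦ cos ((n + 1) * φ) / ((n : ℝ) + 1) ^ 2)
      (φ ^ 2 / 4 - π * φ / 2 + π ^ 2 / 6) := by
  have hx : φ / (2 * π) ∈ Icc (0 : ℝ) 1 := by
    rw [mem_Icc, le_div_iff₀ (by positivity), div_le_one (by positivity)]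
    simpa using hφ
  have hB₂ : (Polynomial.map (algebraMap ℚ ℝ) (Polynomial.bernoulli (2 * 1))).eval (φ / (2 * π)) =
      (φ / (2 * π)) ^ 2 - φ / (2 * π) + 6⁻¹ :=
    bernoulliFun_two _
  have h := hasSum_one_div_nat_pow_mul_cos one_ne_zero hx
  rw [hB₂, ← hasSum_nat_add_iff' 1] at h
  convert h using 1
  · rfl -- the `AddCommMonoid ℝ` instance obtained through `AddCommGroup ℝ`
  · ext n
    push_cast
    field_simp
  · norm_num [Nat.factorial]
    field_simp
    ring

lemma hasSum_cos_mul_geometric (φ : ℝ) {q : ℝ} (hq : |q| < 1) :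
    HasSum (fun n : ℕ ↦ cos ((n + 1) * φ) * q ^ (n + 1))
      ((q * cos φ - q ^ 2) / (1 - 2 * q * cos φ + q ^ 2)) := by
  set z : ℂ := q * Complex.exp (φ * Complex.I)
  have hz : ‖z‖ < 1 := by simpa [z, Complex.norm_exp_ofReal_mul_I] using hq
  have hgeom : HasSum (fun n : ℕ ↦ z ^ (n + 1)) (z / (1 - z)) := by
    simpa [pow_succ', div_eq_mul_inv] using (hasSum_geometric_of_norm_lt_one hz).mul_left z
  have hre := Complex.hasSum_re hgeom
  convert hre using 1
  · ext n
    have harg : ((n + 1 : ℕ) : ℂ) * (φ * Complex.I) = (((n : ℝ) + 1) * φ : ℝ) * Complex.I := by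
      push_cast
      ring
    rw [mul_pow, ← Complex.exp_nat_mul, ← Complex.ofReal_pow, Complex.re_ofReal_mul, harg,
      Complex.exp_ofReal_mul_I_re, mul_comm]
  · have hnormSq : (1 - q * cos φ) * (1 - q * cos φ) + q * sin φ * (q * sin φ) =
        1 - 2 * q * cos φ + q ^ 2 := by
      linear_combination q ^ 2 * sin_sq_add_cos_sq φ
    have hzre : z.re = q * cos φ := by simp [z, Complex.exp_ofReal_mul_I_re]
    have hzim : z.im = q * sin φ := by simp [z, Complex.exp_ofReal_mul_I_im]
    rw [Complex.div_re, Complex.normSq_apply, Complex.sub_re, Complex.sub_im, Complex.one_re,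
      Complex.one_im, hzre, hzim, ← add_div]
    congr 1
    · linear_combination q ^ 2 * sin_sq_add_cos_sq φ
    · linear_combination (-q ^ 2) * sin_sq_add_cos_sq φ

lemma sech_sq_sub_csch_sq_div_eq {a b x φ : ℝ} (hab : 0 < a + b) (hφ : cos φ * (a + b) = a - b)
    (hx : 0 < x) :
    (a * (1 / cosh x) ^ 2 - b * (1 / sinh x) ^ 2) / (a * tanh x + b * (cosh x / sinh x)) =
      4 * ((rexp (-(2 * x)) * cos φ - rexp (-(2 * x)) ^ 2) /
        (1 - 2 * rexp (-(2 * x)) * cos φ + rexp (-(2 * x)) ^ 2)) -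
      4 * (rexp (-(2 * x)) ^ 2 / (1 - rexp (-(2 * x)) ^ 2)) := by
  set u := rexp (-x)
  have hu0 : 0 < u := exp_pos _
  have hu1 : u < 1 := exp_lt_one_iff.mpr (by linarith)
  have hq : rexp (-(2 * x)) = u ^ 2 := by rw [← exp_nat_mul]; ring_nf
  have hxu : rexp x = u⁻¹ := by simp [u, exp_neg]
  have hcosh : cosh x = (1 + u ^ 2) / (2 * u) := by
    rw [cosh_eq, hxu]; field_simp; ring
  have hsinh : sinh x = (1 - u ^ 2) / (2 * u) := by
    rw [sinh_eq, hxu]; field_simp; ring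
  have h1 : 0 < 1 - u ^ 2 := by nlinarith
  have hP : 0 < 1 - u ^ 2 * 2 * cos φ + u ^ 4 := by nlinarith [cos_le_one φ]
  have hD : a * (1 - u ^ 2) ^ 2 + (1 + u ^ 2) ^ 2 * b ≠ 0 := by
    have : a * (1 - u ^ 2) ^ 2 + (1 + u ^ 2) ^ 2 * b =
        (a + b) * (1 - u ^ 2 * 2 * cos φ + u ^ 4) := by
      linear_combination 2 * u ^ 2 * hφ
    rw [this]; positivity
  have h4 : 1 - u ^ 4 ≠ 0 := by nlinarith
  rw [hq, tanh_eq_sinh_div_cosh, hcosh, hsinh]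
  field_simp
  linear_combination -4 * (1 - u ^ 4) ^ 3 * hφ

/-- In the exponential expansion of the integrand, the first copy of `ℕ` indexes the terms
`4 cos ((n + 1) φ) e^{-2(n+1)x}`, the second one the terms `-4 e^{-4(n+1)x}`. -/
noncomputable def expSeriesCoeff (φ : ℝ) : ℕ ⊕ ℕ → ℝ :=
  Sum.elim (fun n ↦ 4 * cos ((n + 1) * φ)) fun _ ↦ -4

def expSeriesRate : ℕ ⊕ ℕ → ℝ :=
  Sum.elim (fun n ↦ 2 * (n + 1)) fun n ↦ 4 * (n + 1)

lemma expSeriesRate_pos (i : ℕ ⊕ ℕ) : 0 < expSeriesRate i := by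
  cases i <;> simp only [expSeriesRate, Sum.elim_inl, Sum.elim_inr] <;> positivity

lemma hasSum_expSeries_sech_sq_sub_csch_sq_div {a b x φ : ℝ} (hab : 0 < a + b)
    (hφ : cos φ * (a + b) = a - b) (hx : 0 < x) :
    HasSum (fun i ↦ expSeriesCoeff φ i * rexp (-expSeriesRate i * x))
      ((a * (1 / cosh x) ^ 2 - b * (1 / sinh x) ^ 2) / (a * tanh x + b * (cosh x / sinh x))) := by
  set q := rexp (-(2 * x))
  have hq0 : 0 < q := exp_pos _
  have hq1 : q < 1 := exp_lt_one_iff.mpr (by linarith)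
  have hcos := (hasSum_cos_mul_geometric φ (abs_lt.mpr ⟨by linarith, hq1⟩)).mul_left 4
  have hgeom :=
    ((hasSum_geometric_of_lt_one (sq_nonneg q) (by nlinarith)).mul_left (q ^ 2)).mul_left (-4)
  rw [sech_sq_sub_csch_sq_div_eq hab hφ hx]
  convert HasSum.sum (f := fun i ↦ expSeriesCoeff φ i * rexp (-expSeriesRate i * x))
    (hcos.congr_fun fun n ↦ ?_) (hgeom.congr_fun fun n ↦ ?_) using 1
  · ring
  · simp only [Function.comp_apply, expSeriesCoeff, expSeriesRate, Sum.elim_inl, q, ← exp_nat_mul]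
    push_cast
    ring_nf
  · simp only [Function.comp_apply, expSeriesCoeff, expSeriesRate, Sum.elim_inr, q, ← exp_nat_mul,
      ← exp_add]
    push_cast
    ring_nf

lemma hasSum_expSeriesCoeff_div_rate_sq {φ : ℝ} (hφ : φ ∈ Icc 0 (2 * π)) :
    HasSum (fun i ↦ expSeriesCoeff φ i / expSeriesRate i ^ 2)
      (φ ^ 2 / 4 - π * φ / 2 + π ^ 2 / 6 - π ^ 2 / 24) := by
  have h₀ : (0 : ℝ) ∈ Icc 0 (2 * π) := ⟨le_rfl, by positivity⟩
  convert HasSum.sum (f := fun i ↦ expSeriesCoeff φ i / expSeriesRate i ^ 2)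
    (hasSum_cos_div_sq hφ |>.congr_fun fun n ↦ ?_)
    (hasSum_cos_div_sq h₀ |>.mul_left (-1 / 4) |>.congr_fun fun n ↦ ?_) using 1
  · ring
  · simp only [Function.comp_apply, expSeriesCoeff, expSeriesRate, Sum.elim_inl]
    field_simp
    ring
  · simp [expSeriesCoeff, expSeriesRate]
    field_simp

lemma cos_two_mul_arcsin_sqrt_div_mul {a b : ℝ} (ha : 0 ≤ a) (hb : 0 ≤ b) (hab : 0 < a + b) :
    cos (2 * arcsin √(b / (a + b))) * (a + b) = a - b := by
  have h₀ : 0 ≤ b / (a + b) := div_nonneg hb hab.le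
  have h₁ : b / (a + b) ≤ 1 := (div_le_one hab).mpr (by linarith)
  rw [cos_two_mul_eq_one_sub, sin_arcsin (by linarith [sqrt_nonneg (b / (a + b))])
    (sqrt_le_one.mpr h₁), sq_sqrt h₀]
  field_simp
  ring

lemma summable_abs_expSeriesCoeff_div_rate_sq (φ : ℝ) :
    Summable fun i ↦ |expSeriesCoeff φ i| / expSeriesRate i ^ 2 := by
  have h₀ : (0 : ℝ) ∈ Icc 0 (2 * π) := ⟨le_rfl, by positivity⟩
  refine (hasSum_expSeriesCoeff_div_rate_sq h₀).summable.abs.of_nonneg_of_le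
    (fun i ↦ by positivity) fun i ↦ ?_
  rw [abs_div, abs_of_pos (pow_pos (expSeriesRate_pos i) 2)]
  gcongr ?_ / _
  cases i <;> simp [expSeriesCoeff, abs_cos_le_one]

/-- for nonnegative reals `a, b`, not both zero, with
`θ = arcsin(√(b/(a+b)))`,
`∫_0^∞ x (a sech²x − b csch²x)/(a tanh x + b coth x) dx = θ(θ − π) + π²/8`. -/
theorem integral_sech_csch (a b : ℝ) (ha : 0 ≤ a) (hb : 0 ≤ b) (hab : a ≠ 0 ∨ b ≠ 0) :
    ∫ x in Set.Ioi (0 : ℝ),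
        x * (a * (1 / Real.cosh x) ^ 2 - b * (1 / Real.sinh x) ^ 2) /
          (a * Real.tanh x + b * (Real.cosh x / Real.sinh x)) =
      Real.arcsin (Real.sqrt (b / (a + b))) *
          (Real.arcsin (Real.sqrt (b / (a + b))) - Real.pi) +
        Real.pi ^ 2 / 8 := by
  have hs : 0 < a + b := by
    rcases hab with h | h
    · linarith [ha.lt_of_ne' h]
    · linarith [hb.lt_of_ne' h]
  set θ := arcsin √(b / (a + b))
  have hθ : 2 * θ ∈ Icc 0 (2 * π) :=
    ⟨by linarith [(arcsin_nonneg.mpr (sqrt_nonneg _) : 0 ≤ θ)],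
      by linarith [(arcsin_le_pi_div_two _ : θ ≤ π / 2), pi_pos]⟩
  have hseries := hasSum_integral_mul_of_hasSum_exp expSeriesRate_pos
    (fun x hx ↦ hasSum_expSeries_sech_sq_sub_csch_sq_div hs
      (cos_two_mul_arcsin_sqrt_div_mul ha hb hs) hx)
    (summable_abs_expSeriesCoeff_div_rate_sq (2 * θ))
  simp_rw [mul_div_assoc]
  rw [hseries.unique (hasSum_expSeriesCoeff_div_rate_sq hθ)]
  ring
end

section
/- Let L > 0 be real, let B ≥ 2 be an integer, and let s ∈ ℂ with Re(s) > 1/2. Then ∑_{n=1}^∞ (nπ/L)^{−2s} + (B−1)·∑_{m=0}^∞ ((2m+1)π/(2L))^{−2s} = (π/L)^{−2s} · ((B−1)·2^{2s} − B + 2) · ζ(2s), where ζ is the Riemann zeta function. (This is the spectral zeta function of the star graph with B bonds of equal length L, Neumann matching conditions at the center and Neumann conditions at the nodes, whose k-spectrum consists of the points nπ/L with multiplicity 1 and (2m+1)π/(2L) with multiplicity B−1.) -/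
/-!
Scaling the spectrum by `π/L` factors out `(π/L)^{-2s}`, leaving the Dirichlet series of all
positive integers, which is `ζ(2s)`, and that of the odd ones, which is `(1 - 2^{-2s}) ζ(2s)`
after removing the even terms `2^{-2s} ζ(2s)`. The half-integer spectrum `(2m+1)π/(2L)` carries
the extra factor `2^{2s}`, and the two contributions combine to the stated multiple of `ζ(2s)`.
-/

open Real Complex

theorem HasSum.ofReal_mul_cpow {s S : ℂ} {f : ℕ → ℝ} (hf : ∀ n, 0 ≤ f n) {a : ℝ} (ha : 0 ≤ a)
    (h : HasSum (fun n => (f n : ℂ) ^ s) S) :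
    HasSum (fun n => ((f n * a : ℝ) : ℂ) ^ s) (S * (a : ℂ) ^ s) := by
  simpa only [ofReal_mul, mul_cpow_ofReal_nonneg (hf _) ha] using h.mul_right _

namespace Complex

variable {s : ℂ}

theorem hasSum_nat_cpow_neg_riemannZeta (hs : 1 < s.re) :
    HasSum (fun n : ℕ => (n : ℂ) ^ (-s)) (riemannZeta s) := by
  have hsum : Summable fun n : ℕ => (n : ℂ) ^ (-s) := by
    simpa only [cpow_neg, one_div] using summable_one_div_nat_cpow.mpr hs
  simpa only [zeta_eq_tsum_one_div_nat_cpow hs, cpow_neg, one_div] using hsum.hasSum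

theorem hasSum_nat_add_one_cpow_neg_riemannZeta (hs : 1 < s.re) :
    HasSum (fun n : ℕ => ((n + 1 : ℝ) : ℂ) ^ (-s)) (riemannZeta s) := by
  have h := (hasSum_nat_add_iff' 1).mpr (hasSum_nat_cpow_neg_riemannZeta hs)
  have hs0 : -s ≠ 0 := neg_ne_zero.mpr (ne_zero_of_one_lt_re hs)
  simpa [zero_cpow hs0] using h

theorem hasSum_odd_cpow_neg_riemannZeta (hs : 1 < s.re) :
    HasSum (fun m : ℕ => ((2 * m + 1 : ℝ) : ℂ) ^ (-s)) ((1 - 2 ^ (-s)) * riemannZeta s) := by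
  have hall := hasSum_nat_cpow_neg_riemannZeta hs
  have heven : HasSum (fun k : ℕ => ((2 * k : ℕ) : ℂ) ^ (-s)) (2 ^ (-s) * riemannZeta s) := by
    refine (hall.mul_left (2 ^ (-s))).congr_fun fun k => ?_
    exact_mod_cast natCast_mul_natCast_cpow 2 k (-s)
  have hodd : Summable fun k : ℕ => ((2 * k + 1 : ℕ) : ℂ) ^ (-s) :=
    hall.summable.comp_injective fun a b hab => by simpa using hab
  have htotal :=
    (HasSum.even_add_odd (f := fun n : ℕ => (n : ℂ) ^ (-s)) heven hodd.hasSum).unique hall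
  have hodd_eq : ∑' k : ℕ, ((2 * k + 1 : ℕ) : ℂ) ^ (-s) = (1 - 2 ^ (-s)) * riemannZeta s := by
    linear_combination htotal
  exact (hodd_eq ▸ hodd.hasSum).congr_fun fun m => by push_cast; rfl

theorem ofReal_div_two_cpow_neg {a : ℝ} (ha : 0 ≤ a) :
    ((a / 2 : ℝ) : ℂ) ^ (-s) = (a : ℂ) ^ (-s) * 2 ^ s := by
  have harg : (2 : ℂ).arg ≠ π := by rw [ofNat_arg]; exact pi_pos.ne
  rw [div_eq_mul_inv, ofReal_mul, mul_cpow_ofReal_nonneg ha (by norm_num), ofReal_inv,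
    ofReal_ofNat, inv_cpow _ _ harg, ← cpow_neg, neg_neg]

end Complex

theorem neumann_star_equal_lengths_zeta_general (L : ℝ) (hL : 0 < L) (B : ℕ)
    (s : ℂ) (hs : 1 / 2 < s.re) :
    (∑' n : ℕ, (((n + 1) * Real.pi / L : ℝ) : ℂ) ^ (-2 * s)) +
      ((B : ℂ) - 1) * ∑' m : ℕ, (((2 * m + 1) * Real.pi / (2 * L) : ℝ) : ℂ) ^ (-2 * s) =
      ((Real.pi / L : ℝ) : ℂ) ^ (-2 * s) *
        (((B : ℂ) - 1) * (2 : ℂ) ^ (2 * s) - (B : ℂ) + 2) * riemannZeta (2 * s) := by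
  have h2s : 1 < (2 * s).re := by
    simp only [mul_re, re_ofNat, im_ofNat, zero_mul, sub_zero]; linarith
  have hπL : 0 ≤ π / L := (div_pos pi_pos hL).le
  have hhalf : π / (2 * L) = π / L / 2 := by ring
  have hint := (hasSum_nat_add_one_cpow_neg_riemannZeta h2s).ofReal_mul_cpow
    (fun n => by positivity) hπL
  have hodd := (hasSum_odd_cpow_neg_riemannZeta h2s).ofReal_mul_cpow
    (fun n => by positivity) (div_pos pi_pos (by positivity : (0 : ℝ) < 2 * L)).le
  have hcancel : (2 : ℂ) ^ (-(2 * s)) * 2 ^ (2 * s) = 1 := by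
    rw [← cpow_add _ _ two_ne_zero, neg_add_cancel, cpow_zero]
  simp only [neg_mul, mul_div_assoc]
  rw [hint.tsum_eq, hodd.tsum_eq, hhalf, ofReal_div_two_cpow_neg hπL]
  linear_combination (1 - (B : ℂ)) * riemannZeta (2 * s) * ((π / L : ℝ) : ℂ) ^ (-(2 * s)) * hcancel

/-- for `L > 0`, `B ≥ 2` and `Re s > 1/2`, the spectral zeta function of the
equal-bond-length Neumann star graph:
`∑_{n≥1} (nπ/L)^{−2s} + (B−1) ∑_{m≥0} ((2m+1)π/(2L))^{−2s}
  = (π/L)^{−2s} ((B−1) 2^{2s} − B + 2) ζ(2s)`. -/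
theorem neumann_star_equal_lengths_zeta (L : ℝ) (hL : 0 < L) (B : ℕ) (hB : 2 ≤ B)
    (s : ℂ) (hs : 1 / 2 < s.re) :
    (∑' n : ℕ, (((n + 1) * Real.pi / L : ℝ) : ℂ) ^ (-2 * s)) +
      ((B : ℂ) - 1) * ∑' m : ℕ, (((2 * m + 1) * Real.pi / (2 * L) : ℝ) : ℂ) ^ (-2 * s) =
      ((Real.pi / L : ℝ) : ℂ) ^ (-2 * s) *
        (((B : ℂ) - 1) * (2 : ℂ) ^ (2 * s) - (B : ℂ) + 2) * riemannZeta (2 * s) :=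
  neumann_star_equal_lengths_zeta_general L hL B s hs
end

section
/- Let L > 0 be real, let B_N ≥ 1 and B_D ≥ 1 be integers, set B = B_N + B_D and α = (1/π)·arcsin(√(B_D/B)). Define h : ℂ → ℂ by h(s) = (π/L)^{−2s} · [ ζ_H(2s, α) + ζ_H(2s, 1−α) + (B_D − B_N + (B_N−1)·2^{2s}) · ζ(2s) ]. Then (1/2)·h(−1/2) = (π/(48·L)) · ( B − 3·(B_D + 1) + 24·α·(1−α) ). (This is the vacuum energy of the equal-bond-length star graph with Neumann matching at the center, B_D Dirichlet nodes and B_N Neumann nodes.) -/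
open Real Complex

/-- with `h(s) = (π/L)^{−2s}[ζ_H(2s,α)+ζ_H(2s,1−α)+(B_D−B_N+(B_N−1)2^{2s})ζ(2s)]`,
`α = arcsin(√(B_D/B))/π`, `B = B_N + B_D`, the vacuum energy is
`(1/2) h(−1/2) = (π/(48L))(B − 3(B_D+1) + 24α(1−α))`. -/
theorem mixed_star_equal_lengths_vacuum_energy (L : ℝ) (hL : 0 < L) (BN BD : ℕ)
    (hBN : 1 ≤ BN) (hBD : 1 ≤ BD)
    (B : ℕ) (hB : B = BN + BD)
    (α : ℝ) (hα : α = Real.arcsin (Real.sqrt ((BD : ℝ) / (B : ℝ))) / Real.pi) :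
    (1 / 2 : ℂ) *
        (((Real.pi / L : ℝ) : ℂ) ^ (-2 * (-1 / 2 : ℂ)) *
          (HurwitzZeta.hurwitzZeta (α : UnitAddCircle) (2 * (-1 / 2 : ℂ)) +
            HurwitzZeta.hurwitzZeta ((1 - α : ℝ) : UnitAddCircle) (2 * (-1 / 2 : ℂ)) +
            ((BD : ℂ) - (BN : ℂ) + ((BN : ℂ) - 1) * (2 : ℂ) ^ (2 * (-1 / 2 : ℂ))) *
              riemannZeta (2 * (-1 / 2 : ℂ)))) =
      ((Real.pi : ℂ) / (48 * (L : ℂ))) *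
        ((B : ℂ) - 3 * ((BD : ℂ) + 1) + 24 * (α : ℂ) * (1 - (α : ℂ))) := by
  have harcsin : Real.arcsin (Real.sqrt ((BD : ℝ) / (B : ℝ))) ∈ Set.Icc 0 (Real.pi / 2) := by
    constructor
    · exact Real.arcsin_nonneg.2 (Real.sqrt_nonneg _)
    · exact Real.arcsin_le_pi_div_two _
  have hα01 : α ∈ Set.Icc (0 : ℝ) 1 := by
    rw [hα]
    constructor
    · exact div_nonneg harcsin.1 Real.pi_pos.le
    · rw [div_le_one Real.pi_pos]
      linarith [harcsin.2, Real.pi_pos]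
  have hα01' : (1 - α : ℝ) ∈ Set.Icc (0 : ℝ) 1 := by
    constructor <;> [linarith [hα01.2]; linarith [hα01.1]]
  have he : (2 * (-1 / 2 : ℂ)) = -(1 : ℕ) := by norm_num
  have hz : riemannZeta (2 * (-1 / 2 : ℂ)) = -1 / 12 := by
    rw [he, riemannZeta_neg_nat_eq_bernoulli]
    norm_num [bernoulli]
  have hb : ∀ z : ℂ, ((Polynomial.bernoulli 2).map (algebraMap ℚ ℂ)).eval z =
      z ^ 2 - z + 1 / 6 := by
    intro z
    simp [Polynomial.bernoulli, Finset.sum_range_succ, Polynomial.eval_monomial,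
      _root_.bernoulli_zero, _root_.bernoulli_one,
      show _root_.bernoulli 2 = 1 / 6 by rw [bernoulli_eq_bernoulli'_of_ne_one (by norm_num), bernoulli'_two]]
    ring
  have hH : ∀ x : ℝ, x ∈ Set.Icc (0 : ℝ) 1 →
      HurwitzZeta.hurwitzZeta (x : UnitAddCircle) (2 * (-1 / 2 : ℂ)) =
        -1 / 2 * ((x : ℂ) ^ 2 - x + 1 / 6) := by
    intro x hx
    rw [he, HurwitzZeta.hurwitzZeta_neg_nat one_ne_zero hx, hb]
    push_cast
    ring
  have hpow : ((Real.pi / L : ℝ) : ℂ) ^ (-2 * (-1 / 2 : ℂ)) = (Real.pi : ℂ) / L := by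
    norm_num
  have h2 : (2 : ℂ) ^ (2 * (-1 / 2 : ℂ)) = 1 / 2 := by
    rw [show (2 * (-1 / 2 : ℂ)) = (-1 : ℂ) by norm_num, Complex.cpow_neg_one]
    norm_num
  rw [hH α hα01, hH (1 - α) hα01', hpow, h2, hz, hB]
  have hL' : (L : ℂ) ≠ 0 := by exact_mod_cast hL.ne'
  push_cast
  field_simp
  ring
end

section
/- Let B_N ≥ 1 and B_D ≥ 1 be integers, set B = B_N + B_D, and let L_1,…,L_{B_N} (Neumann-node bond lengths) and ℓ_1,…,ℓ_{B_D} (Dirichlet-node bond lengths) be positive reals. Define G : ℂ → ℂ by G(s) = (2^{2s} − 1)·ζ(2s)·∑_{n=1}^{B_N} (π/L_n)^{−2s} + ζ(2s)·∑_{d=1}^{B_D} (π/ℓ_d)^{−2s}. Then the derivative of G at s = 0 equals −log( 2^B · ∏_{d=1}^{B_D} ℓ_d ). (This is the pole contribution ζ'_P(0) for the star graph with mixed Dirichlet and Neumann nodes.) -/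
open Real Complex BigOperators

/-! Since `2^{2s} − 1` vanishes at `s = 0`, the Neumann part contributes only
`(2 log 2)·ζ(0)·B_N = −B_N log 2`, and the lengths `L_n` drop out. The Dirichlet part contributes
`2ζ'(0)·B_D − 2ζ(0)·∑ log(π/ℓ_d)`; with `ζ(0) = −1/2` and `ζ'(0) = −log(2π)/2` the `log π` terms
cancel. -/

theorem hasDerivAt_cpow_const_mul_zero {c : ℂ} (hc : c ≠ 0) (a : ℂ) :
    HasDerivAt (fun s : ℂ => c ^ (a * s)) (a * Complex.log c) 0 := by
  simpa [mul_comm a] using ((hasDerivAt_id (0 : ℂ)).const_mul a).const_cpow (Or.inl hc)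

theorem hasDerivAt_riemannZeta_two_mul_zero :
    HasDerivAt (fun s : ℂ => riemannZeta (2 * s)) (-(Real.log (2 * π) : ℂ)) 0 := by
  have hζ : HasDerivAt riemannZeta (-(Real.log (2 * π) : ℂ) / 2) (2 * 0) := by
    rw [mul_zero, ofReal_log two_pi_pos.le, ofReal_mul, ofReal_ofNat, ← deriv_riemannZeta_zero]
    exact (differentiableAt_riemannZeta zero_ne_one).hasDerivAt
  refine (hζ.comp 0 ((hasDerivAt_id (0 : ℂ)).const_mul 2)).congr_deriv ?_
  ring

theorem hasDerivAt_sum_ofReal_cpow_neg_two_mul_zero {ι : Type*} [Fintype ι] (x : ι → ℝ)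
    (hx : ∀ i, 0 < x i) :
    HasDerivAt (fun s : ℂ => ∑ i, (x i : ℂ) ^ (-2 * s)) (-2 * ∑ i, (Real.log (x i) : ℂ)) 0 := by
  rw [Finset.mul_sum]
  refine HasDerivAt.fun_sum fun i _ => ?_
  rw [ofReal_log (hx i).le]
  exact hasDerivAt_cpow_const_mul_zero (ofReal_ne_zero.mpr (hx i).ne') _

theorem mixed_star_pole_deriv_zero_general (BN BD : ℕ)
    (B : ℕ) (hB : B = BN + BD)
    (L : Fin BN → ℝ) (hL : ∀ n, 0 < L n)
    (ℓ : Fin BD → ℝ) (hℓ : ∀ d, 0 < ℓ d) :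
    deriv (fun s : ℂ =>
        ((2 : ℂ) ^ (2 * s) - 1) * riemannZeta (2 * s) *
            (∑ n : Fin BN, ((Real.pi / L n : ℝ) : ℂ) ^ (-2 * s)) +
          riemannZeta (2 * s) *
            (∑ d : Fin BD, ((Real.pi / ℓ d : ℝ) : ℂ) ^ (-2 * s))) 0 =
      -(Real.log (2 ^ B * ∏ d : Fin BD, ℓ d) : ℂ) := by
  have hN := hasDerivAt_sum_ofReal_cpow_neg_two_mul_zero _ fun n => div_pos pi_pos (hL n)
  have hD := hasDerivAt_sum_ofReal_cpow_neg_two_mul_zero _ fun d => div_pos pi_pos (hℓ d)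
  have hζ := hasDerivAt_riemannZeta_two_mul_zero
  have h2 := (hasDerivAt_cpow_const_mul_zero two_ne_zero 2).sub_const 1
  rw [(((h2.fun_mul hζ).fun_mul hN).fun_add (hζ.fun_mul hD)).deriv]
  rw [Real.log_mul (by positivity) (Finset.prod_pos fun d _ => hℓ d).ne', Real.log_pow,
    Real.log_prod fun d _ => (hℓ d).ne', ← ofReal_ofNat, ← ofReal_log zero_le_two]
  simp only [mul_zero, cpow_zero, sub_self, riemannZeta_zero]
  push_cast [Real.log_mul two_ne_zero pi_ne_zero, Real.log_div pi_ne_zero (hℓ _).ne',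
    Finset.sum_sub_distrib, Finset.sum_const, Finset.card_univ, Fintype.card_fin, nsmul_eq_mul, hB]
  ring

/-- with
`G(s) = (2^{2s}−1)ζ(2s)∑_n (π/L_n)^{−2s} + ζ(2s)∑_d (π/ℓ_d)^{−2s}`, the pole contribution
for a star graph with `B_N` Neumann and `B_D` Dirichlet nodes (`B = B_N + B_D`) satisfies
`G'(0) = −log(2^B ∏_d ℓ_d)`. -/
theorem mixed_star_pole_deriv_zero (BN BD : ℕ) (hBN : 1 ≤ BN) (hBD : 1 ≤ BD)
    (B : ℕ) (hB : B = BN + BD)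
    (L : Fin BN → ℝ) (hL : ∀ n, 0 < L n)
    (ℓ : Fin BD → ℝ) (hℓ : ∀ d, 0 < ℓ d) :
    deriv (fun s : ℂ =>
        ((2 : ℂ) ^ (2 * s) - 1) * riemannZeta (2 * s) *
            (∑ n : Fin BN, ((Real.pi / L n : ℝ) : ℂ) ^ (-2 * s)) +
          riemannZeta (2 * s) *
            (∑ d : Fin BD, ((Real.pi / ℓ d : ℝ) : ℂ) ^ (-2 * s))) 0 =
      -(Real.log (2 ^ B * ∏ d : Fin BD, ℓ d) : ℂ) :=
  mixed_star_pole_deriv_zero_general BN BD B hB L hL ℓ hℓ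
end
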